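/- Let α ≥ 0, γ ≥ 1 be real and β ∈ ℂ with 2(γ+α) > |β|. Then Σ_{n=1}^∞ |A_n| ≤ 2|β|/(2(γ+α)−|β|), equivalently ((2(γ+α)−|β|)/(2|β|)) · Σ_{n=1}^∞ |A_n| ≤ 1 (when β ≠ 0), where A_n = β^n Γ(γ+α)/Γ((γ+α)(n+1)). -/

import Mathlib

open Complex

noncomputable def rabA (α γ : ℝ) (β : ℂ) (n : ℕ) : ℂ :=
  β ^ n * (Real.Gamma (γ + α) : ℂ) / (Real.Gamma ((γ + α) * (n + 1)) : ℂ)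

noncomputable def rab (α γ : ℝ) (β : ℂ) (z : ℂ) : ℂ :=
  z + ∑' k : ℕ, rabA α γ β (k + 1) * z ^ (k + 2)

noncomputable def rabPartial (α γ : ℝ) (β : ℂ) (m : ℕ) (z : ℂ) : ℂ :=
  z + ∑ k ∈ Finset.range m, rabA α γ β (k + 1) * z ^ (k + 2)

noncomputable def rabD (α γ : ℝ) (β : ℂ) (z : ℂ) : ℂ :=
  1 + ∑' k : ℕ, ((k : ℂ) + 2) * rabA α γ β (k + 1) * z ^ (k + 1)

noncomputable def rabDPartial (α γ : ℝ) (β : ℂ) (m : ℕ) (z : ℂ) : ℂ :=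
  1 + ∑ k ∈ Finset.range m, ((k : ℂ) + 2) * rabA α γ β (k + 1) * z ^ (k + 1)

noncomputable def rabAlex (α γ : ℝ) (β : ℂ) (z : ℂ) : ℂ :=
  z + ∑' k : ℕ, rabA α γ β (k + 1) / ((k : ℂ) + 2) * z ^ (k + 2)

noncomputable def rabAlexPartial (α γ : ℝ) (β : ℂ) (m : ℕ) (z : ℂ) : ℂ :=
  z + ∑ k ∈ Finset.range m, rabA α γ β (k + 1) / ((k : ℂ) + 2) * z ^ (k + 2)


/-! Iterating `Γ(x + 1) = x Γ(x)` and using that `Γ` increases on `[2, ∞)` gives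
`Γ(c (n + 1)) ≥ Γ(c) cⁿ n! ≥ Γ(c) (2c)ⁿ / 2` for `c ≥ 1`, so `|A_n| ≤ 2 (|β| / 2c)ⁿ` and the
series is dominated by a geometric one. -/

open Nat in
lemma Real.Gamma_mul_pow_mul_factorial_le {c : ℝ} (hc : 1 ≤ c) (n : ℕ) :
    Real.Gamma c * c ^ n * n ! ≤ Real.Gamma (c * (n + 1)) := by
  induction n with
  | zero => simp
  | succ n ih =>
    have hx : 1 ≤ c * (n + 1) := one_le_mul_of_one_le_of_one_le hc (by simp)
    -- `Γ` is increasing on `[2, ∞)`, and `c * (n + 1) + 1 ≤ c * (n + 2)` because `1 ≤ c`.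
    have hmono : Real.Gamma (c * (n + 1) + 1) ≤ Real.Gamma (c * (n + 1 + 1)) :=
      Real.Gamma_strictMonoOn_Ici.monotoneOn (Set.mem_Ici.2 (by linarith))
        (Set.mem_Ici.2 (by nlinarith)) (by nlinarith)
    calc Real.Gamma c * c ^ (n + 1) * ↑(n + 1)!
        = c * (n + 1) * (Real.Gamma c * c ^ n * n !) := by push_cast [factorial_succ]; ring
      _ ≤ c * (n + 1) * Real.Gamma (c * (n + 1)) := by gcongr
      _ = Real.Gamma (c * (n + 1) + 1) := (Real.Gamma_add_one (by positivity)).symm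
      _ ≤ Real.Gamma (c * (↑(n + 1) + 1)) := by push_cast; exact hmono

open Nat in
lemma Nat.two_pow_le_two_mul_factorial (n : ℕ) : 2 ^ n ≤ 2 * n ! := by
  cases n with
  | zero => simp
  | succ m =>
    calc 2 ^ (m + 1) = 2 * 2 ^ m := by ring
      _ ≤ 2 * (m + 1)! := by
        gcongr; simpa [add_comm] using factorial_mul_pow_le_factorial (m := 1) (n := m)

open Nat in
lemma Real.Gamma_mul_two_mul_pow_le {c : ℝ} (hc : 1 ≤ c) (n : ℕ) :
    Real.Gamma c * (2 * c) ^ n ≤ 2 * Real.Gamma (c * (n + 1)) := by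
  have hfac : (2 : ℝ) ^ n ≤ 2 * n ! := by exact_mod_cast n.two_pow_le_two_mul_factorial
  have hΓ : 0 ≤ Real.Gamma c * c ^ n := by
    have := Real.Gamma_pos_of_pos (by linarith : (0 : ℝ) < c); positivity
  calc Real.Gamma c * (2 * c) ^ n = Real.Gamma c * c ^ n * 2 ^ n := by ring
    _ ≤ Real.Gamma c * c ^ n * (2 * n !) := by gcongr
    _ = 2 * (Real.Gamma c * c ^ n * n !) := by ring
    _ ≤ 2 * Real.Gamma (c * (n + 1)) := by gcongr; exact Real.Gamma_mul_pow_mul_factorial_le hc n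

lemma norm_rabA {α γ : ℝ} (h : 0 < γ + α) (β : ℂ) (n : ℕ) :
    ‖rabA α γ β n‖ = ‖β‖ ^ n * Real.Gamma (γ + α) / Real.Gamma ((γ + α) * (n + 1)) := by
  have h₁ := Real.Gamma_pos_of_pos h
  have h₂ := Real.Gamma_pos_of_pos (mul_pos h n.cast_add_one_pos)
  rw [rabA, norm_div, norm_mul, norm_pow, Complex.norm_real, Complex.norm_real,
    Real.norm_of_nonneg h₁.le, Real.norm_of_nonneg h₂.le]

lemma norm_rabA_le {α γ : ℝ} (h : 1 ≤ γ + α) (β : ℂ) (n : ℕ) :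
    ‖rabA α γ β n‖ ≤ 2 * (‖β‖ / (2 * (γ + α))) ^ n := by
  have hc : 0 < γ + α := by linarith
  rw [norm_rabA hc, div_le_iff₀ (Real.Gamma_pos_of_pos (by positivity))]
  calc ‖β‖ ^ n * Real.Gamma (γ + α)
      = (‖β‖ / (2 * (γ + α))) ^ n * (Real.Gamma (γ + α) * (2 * (γ + α)) ^ n) := by
        rw [div_pow]; field_simp
    _ ≤ (‖β‖ / (2 * (γ + α))) ^ n * (2 * Real.Gamma ((γ + α) * (n + 1))) := by
        gcongr ?_ * ?_; exact Real.Gamma_mul_two_mul_pow_le h n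
    _ = 2 * (‖β‖ / (2 * (γ + α))) ^ n * Real.Gamma ((γ + α) * (n + 1)) := by ring

lemma tsum_geometric_succ_of_lt_one {r : ℝ} (h₀ : 0 ≤ r) (h₁ : r < 1) :
    ∑' n : ℕ, r ^ (n + 1) = r / (1 - r) := by
  simp_rw [pow_succ', tsum_mul_left, tsum_geometric_of_lt_one h₀ h₁, div_eq_mul_inv]

theorem rabA_sum_bound (α γ : ℝ) (β : ℂ) (hα : 0 ≤ α) (hγ : 1 ≤ γ)
    (hβ : ‖β‖ < 2 * (γ + α)) :
    (∑' k : ℕ, ‖rabA α γ β (k + 1)‖) ≤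
      2 * ‖β‖ / (2 * (γ + α) - ‖β‖) := by
  have hc : 1 ≤ γ + α := by linarith
  set r := ‖β‖ / (2 * (γ + α)) with hr
  have hr₀ : 0 ≤ r := by positivity
  have hr₁ : r < 1 := (div_lt_one (by linarith)).2 hβ
  have hgeom : Summable fun k : ℕ => 2 * r ^ (k + 1) :=
    ((summable_nat_add_iff 1).2 (summable_geometric_of_lt_one hr₀ hr₁)).mul_left 2
  have hle (k : ℕ) : ‖rabA α γ β (k + 1)‖ ≤ 2 * r ^ (k + 1) := norm_rabA_le hc β (k + 1)
  calc ∑' k : ℕ, ‖rabA α γ β (k + 1)‖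
      ≤ ∑' k : ℕ, 2 * r ^ (k + 1) :=
        (hgeom.of_nonneg_of_le (fun _ ↦ norm_nonneg _) hle).tsum_le_tsum hle hgeom
    _ = 2 * (r / (1 - r)) := by rw [tsum_mul_left, tsum_geometric_succ_of_lt_one hr₀ hr₁]
    _ = 2 * ‖β‖ / (2 * (γ + α) - ‖β‖) := by
        rw [hr]; field_simp
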